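/- arXiv:2412.02151 — 4 statements merged into one kernel-verified Lean document; each statement's English description precedes it below -/
import Mathlib

section
/- Let T ≥ 2 and let Z ∈ ℝ^{n×k} and W_t ∈ ℝ^{n×k_t} for 1 ≤ t ≤ T. Suppose there exist 1 ≤ t < s ≤ T such that the columns of [Z, W_t, W_s] are linearly independent. Then the column span of Z equals the intersection over 1 ≤ t ≤ T of the column spans of Y_t = [Z, W_t]. -/
open Matrix

/-- Let `T ≥ 2`, `Z ∈ ℝ^{n×k}` and `W_t ∈ ℝ^{n×k_t}` for `1 ≤ t ≤ T`.
If there exist `t < s` such that the columns of `[Z, W_t, W_s]` are linearly independent, then the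
column span of `Z` equals the intersection over `t` of the column spans of `Y_t = [Z, W_t]`. -/
theorem span_shared_eq_iInf_span
    (T n k : ℕ) (hT : 2 ≤ T) (kt : Fin T → ℕ)
    (Z : Matrix (Fin n) (Fin k) ℝ)
    (W : (t : Fin T) → Matrix (Fin n) (Fin (kt t)) ℝ)
    (hpair : ∃ t s : Fin T, t < s ∧ LinearIndependent ℝ
      (fun j (i : Fin n) => Matrix.fromCols (Matrix.fromCols Z (W t)) (W s) i j)) :
    Submodule.span ℝ (Set.range fun j (i : Fin n) => Z i j) =
      ⨅ t : Fin T, Submodule.span ℝ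
        (Set.range fun j (i : Fin n) => Matrix.fromCols Z (W t) i j) := by
  obtain ⟨t, s, hts, hLI⟩ := hpair
  set SZ := Submodule.span ℝ (Set.range fun j (i : Fin n) => Z i j) with hSZ
  have hsplit : ∀ (m : ℕ) (B : Matrix (Fin n) (Fin m) ℝ),
      Submodule.span ℝ (Set.range fun j (i : Fin n) => Matrix.fromCols Z B i j) =
        SZ ⊔ Submodule.span ℝ (Set.range fun j (i : Fin n) => B i j) := by
    intro m B
    have h : (fun j (i : Fin n) => Matrix.fromCols Z B i j) =
        Sum.elim (fun j (i : Fin n) => Z i j) (fun j (i : Fin n) => B i j) := by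
      funext j; cases j <;> rfl
    rw [h, Set.Sum.elim_range, Submodule.span_union]
  have hfun : (fun j (i : Fin n) => Matrix.fromCols (Matrix.fromCols Z (W t)) (W s) i j) =
      Sum.elim (fun j (i : Fin n) => Matrix.fromCols Z (W t) i j)
        (fun j (i : Fin n) => W s i j) := by
    funext j; cases j <;> rfl
  rw [hfun, linearIndependent_sum] at hLI
  obtain ⟨-, -, hdisj⟩ := hLI
  rw [Sum.elim_comp_inl, Sum.elim_comp_inr, hsplit] at hdisj
  apply le_antisymm
  · refine le_iInf fun u => Submodule.span_mono ?_
    rintro _ ⟨j, rfl⟩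
    exact ⟨Sum.inl j, rfl⟩
  · intro x hx
    rw [Submodule.mem_iInf] at hx
    have hxt := hx t
    have hxs := hx s
    rw [hsplit] at hxt hxs
    obtain ⟨z1, hz1, w, hw, rfl⟩ := Submodule.mem_sup.mp hxt
    obtain ⟨z2, hz2, v, hv, hx2⟩ := Submodule.mem_sup.mp hxs
    have hv0 : v = 0 := by
      have hvmem : v ∈ SZ ⊔ Submodule.span ℝ (Set.range fun j (i : Fin n) => W t i j) := by
        have hveq : v = (z1 - z2) + w := by
          have h : v = z1 + w - z2 := by rw [← hx2]; abel
          rw [h]; abel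
        rw [hveq]
        exact Submodule.add_mem _ (Submodule.mem_sup_left (Submodule.sub_mem _ hz1 hz2))
          (Submodule.mem_sup_right hw)
      exact Submodule.disjoint_def.mp hdisj v hvmem hv
    have : z1 + w = z2 := by rw [← hx2, hv0, add_zero]
    rw [this]
    exact hz2
end

section
/- Let Z ∈ ℝ^{n×k}, W_t ∈ ℝ^{n×k_t}, W_s ∈ ℝ^{n×k_s}, and suppose the columns of [Z, W_t, W_s] are linearly independent. Set Y_t^⋆ = [Z, W_t] ∈ ℝ^{n×d_t} with d_t = k + k_t and Y_s^⋆ = [Z, W_s] ∈ ℝ^{n×d_s} with d_s = k + k_s. Let Y_t ∈ ℝ^{n×d_t} and Y_s ∈ ℝ^{n×d_s} satisfy Y_t Y_tᵀ = Y_t^⋆ Y_t^⋆ᵀ and Y_s Y_sᵀ = Y_s^⋆ Y_s^⋆ᵀ. Then the kernel of the matrix [Y_t, Y_s] ∈ ℝ^{n×(d_t+d_s)} (regarded as a linear map ℝ^{d_t+d_s} → ℝ^n) has dimension k, and for any matrix V ∈ ℝ^{(d_t+d_s)×k} whose columns form an orthonormal basis of this kernel, Z Zᵀ = [Y_t, −Y_s]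 V Vᵀ [Y_t, −Y_s]ᵀ / 2. -/
open Matrix

lemma cols_indep_mulVec {m q : Type*} [Fintype m] [Fintype q] (M : Matrix m q ℝ)
    (h : LinearIndependent ℝ (fun j i => M i j)) : ∀ c, M *ᵥ c = 0 → c = 0 := by
  intro c hc
  have := Fintype.linearIndependent_iff.mp h c ?_
  · funext j; exact this j
  · funext i
    have : (M *ᵥ c) i = 0 := by rw [hc]; rfl
    simpa [mulVec, dotProduct, Finset.sum_apply, mul_comm] using this

lemma exists_orthogonal_factor {m q : Type*} [Fintype m] [Fintype q] [DecidableEq q]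
    (A B : Matrix m q ℝ) (hB : ∀ c, B *ᵥ c = 0 → c = 0) (h : A * Aᵀ = B * Bᵀ) :
    ∃ O : Matrix q q ℝ, O * Oᵀ = 1 ∧ Oᵀ * O = 1 ∧ A = B * O := by
  have hkerB : LinearMap.ker B.mulVecLin = ⊥ := by
    rw [LinearMap.ker_eq_bot']
    intro c hc
    exact hB c hc
  have hGunit : IsUnit (Bᵀ * B) := by
    rw [← Matrix.mulVec_injective_iff_isUnit]
    have hker : LinearMap.ker (Bᵀ * B).mulVecLin = ⊥ := by
      rw [Matrix.ker_mulVecLin_transpose_mul_self]; exact hkerB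
    exact LinearMap.ker_eq_bot.mp hker
  have hGdet : IsUnit (Bᵀ * B).det := (Matrix.isUnit_iff_isUnit_det _).mp hGunit
  have hGinv : (Bᵀ * B)⁻¹ * (Bᵀ * B) = 1 := Matrix.nonsing_inv_mul _ hGdet
  have key : ∀ C : Matrix m q ℝ, LinearMap.range (C * Cᵀ).mulVecLin
      = LinearMap.range C.mulVecLin := by
    intro C
    have hle : LinearMap.range (C * Cᵀ).mulVecLin ≤ LinearMap.range C.mulVecLin := by
      rw [Matrix.mulVecLin_mul]
      exact LinearMap.range_comp_le_range _ _
    have hrk : (C * Cᵀ).rank = C.rank := Matrix.rank_self_mul_transpose C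
    exact Submodule.eq_of_le_of_finrank_le hle (le_of_eq hrk.symm)
  have hrange : LinearMap.range A.mulVecLin ≤ LinearMap.range B.mulVecLin := by
    rw [← key A, h, key B]
  have hcol : ∀ j, ∃ c, B *ᵥ c = fun i => A i j := by
    intro j
    have : (fun i => A i j) ∈ LinearMap.range A.mulVecLin := by
      refine ⟨Pi.single j 1, ?_⟩
      simp [Matrix.mulVecLin_apply, Matrix.mulVec_single]; rfl
    obtain ⟨c, hc⟩ := hrange this
    exact ⟨c, hc⟩
  choose cf hcf using hcol
  have hAC : A = B * Matrix.of fun i j => cf j i := by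
    ext i j
    have := congrFun (hcf j) i
    simpa [Matrix.mul_apply, Matrix.mulVec, dotProduct] using this.symm
  set C : Matrix q q ℝ := Matrix.of fun i j => cf j i
  set O : Matrix q q ℝ := (Bᵀ * B)⁻¹ * (Bᵀ * A) with hOdef
  have hBO : B * O = A := by
    rw [hOdef, hAC]
    calc B * ((Bᵀ * B)⁻¹ * (Bᵀ * (B * C)))
        = B * (((Bᵀ * B)⁻¹ * (Bᵀ * B)) * C) := by simp only [Matrix.mul_assoc]
      _ = B * C := by rw [hGinv, Matrix.one_mul]
  have e2 : (Bᵀ * B) * ((O * Oᵀ) * (Bᵀ * B)) = (Bᵀ * B) * (1 * (Bᵀ * B)) := by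
    have e1 : B * (O * Oᵀ) * Bᵀ = B * Bᵀ := by
      have : (B * O) * (B * O)ᵀ = A * Aᵀ := by rw [hBO]
      rw [h] at this
      calc B * (O * Oᵀ) * Bᵀ = (B * O) * (B * O)ᵀ := by
            simp only [Matrix.transpose_mul, Matrix.mul_assoc]
        _ = B * Bᵀ := this
    have := congrArg (fun X => Bᵀ * X * B) e1
    simpa only [Matrix.mul_assoc, Matrix.one_mul] using this
  have hOOt : O * Oᵀ = 1 := hGunit.mul_right_cancel (hGunit.mul_left_cancel e2)
  exact ⟨O, hOOt, mul_eq_one_comm.mp hOOt, hBO.symm⟩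

/-- **oracle identification of the shared factors.**
Suppose the columns of `[Z, W_t, W_s]` are linearly independent, set `Y_t⋆ = [Z, W_t]` and
`Y_s⋆ = [Z, W_s]`, and let `Y_t, Y_s` be matrices (with `d_t = k + k_t` and `d_s = k + k_s`
columns) with `Y_t Y_tᵀ = Y_t⋆ Y_t⋆ᵀ` and `Y_s Y_sᵀ = Y_s⋆ Y_s⋆ᵀ`.  Then the kernel of
`[Y_t, Y_s] : ℝ^{d_t+d_s} → ℝ^n` has dimension `k`, and for any matrix `V` whose columns are an
orthonormal basis of this kernel (`Vᵀ V = 1` and each column lies in the kernel),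
`Z Zᵀ = [Y_t, −Y_s] V Vᵀ [Y_t, −Y_s]ᵀ / 2`. -/
theorem shared_space_retrieval
    (n k kt ks : ℕ)
    (Z : Matrix (Fin n) (Fin k) ℝ)
    (Wt : Matrix (Fin n) (Fin kt) ℝ) (Ws : Matrix (Fin n) (Fin ks) ℝ)
    (hindep : LinearIndependent ℝ
      (fun j (i : Fin n) => Matrix.fromCols (Matrix.fromCols Z Wt) Ws i j))
    (Yt : Matrix (Fin n) (Fin k ⊕ Fin kt) ℝ) (Ys : Matrix (Fin n) (Fin k ⊕ Fin ks) ℝ)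
    (hYt : Yt * Ytᵀ = Matrix.fromCols Z Wt * (Matrix.fromCols Z Wt)ᵀ)
    (hYs : Ys * Ysᵀ = Matrix.fromCols Z Ws * (Matrix.fromCols Z Ws)ᵀ) :
    Module.finrank ℝ (LinearMap.ker (Matrix.fromCols Yt Ys).mulVecLin) = k ∧
      ∀ V : Matrix ((Fin k ⊕ Fin kt) ⊕ (Fin k ⊕ Fin ks)) (Fin k) ℝ,
        Vᵀ * V = 1 →
        (∀ j, (fun i => V i j) ∈ LinearMap.ker (Matrix.fromCols Yt Ys).mulVecLin) →
        Z * Zᵀ = (2 : ℝ)⁻¹ •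
          (Matrix.fromCols Yt (-Ys) * (V * Vᵀ) * (Matrix.fromCols Yt (-Ys))ᵀ) := by
  -- consequences of linear independence
  have habc : ∀ (a : Fin k → ℝ) (b : Fin kt → ℝ) (c : Fin ks → ℝ),
      Z *ᵥ a + Wt *ᵥ b + Ws *ᵥ c = 0 → a = 0 ∧ b = 0 ∧ c = 0 := by
    intro a b c hzero
    have hmv : Matrix.fromCols (Matrix.fromCols Z Wt) Ws *ᵥ
        Sum.elim (Sum.elim a b) c = 0 := by
      rw [fromCols_mulVec_sumElim, fromCols_mulVec_sumElim]
      exact hzero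
    have h0 := cols_indep_mulVec _ hindep _ hmv
    exact ⟨funext fun j => congrFun h0 (Sum.inl (Sum.inl j)),
      funext fun j => congrFun h0 (Sum.inl (Sum.inr j)),
      funext fun j => congrFun h0 (Sum.inr j)⟩
  have hYtinj : ∀ c, Matrix.fromCols Z Wt *ᵥ c = 0 → c = 0 := by
    intro c hc
    rw [← Sum.elim_comp_inl_inr c, fromCols_mulVec_sumElim] at hc
    obtain ⟨ha, hb, -⟩ := habc (c ∘ Sum.inl) (c ∘ Sum.inr) 0 (by simpa using hc)
    funext j
    cases j with
    | inl j => exact congrFun ha j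
    | inr j => exact congrFun hb j
  have hYsinj : ∀ c, Matrix.fromCols Z Ws *ᵥ c = 0 → c = 0 := by
    intro c hc
    rw [← Sum.elim_comp_inl_inr c, fromCols_mulVec_sumElim] at hc
    obtain ⟨ha, -, hb⟩ := habc (c ∘ Sum.inl) 0 (c ∘ Sum.inr)
      (by simpa [add_right_comm] using hc)
    funext j
    cases j with
    | inl j => exact congrFun ha j
    | inr j => exact congrFun hb j
  -- orthogonal factors
  obtain ⟨Ot, hOt1, hOt2, hYtfac⟩ :=
    exists_orthogonal_factor Yt (Matrix.fromCols Z Wt) hYtinj hYt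
  obtain ⟨Os, hOs1, hOs2, hYsfac⟩ :=
    exists_orthogonal_factor Ys (Matrix.fromCols Z Ws) hYsinj hYs
  -- the explicit kernel matrix
  set Et := Matrix.fromRows (1 : Matrix (Fin k) (Fin k) ℝ) (0 : Matrix (Fin kt) (Fin k) ℝ)
    with hEt
  set Es := Matrix.fromRows (1 : Matrix (Fin k) (Fin k) ℝ) (0 : Matrix (Fin ks) (Fin k) ℝ)
    with hEs
  have hEtEt : Etᵀ * Et = 1 := by
    rw [hEt, transpose_fromRows, fromCols_mul_fromRows]; simp
  have hEsEs : Esᵀ * Es = 1 := by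
    rw [hEs, transpose_fromRows, fromCols_mul_fromRows]; simp
  have hEtv : ∀ a : Fin k → ℝ, Et *ᵥ a = Sum.elim a 0 := by
    intro a
    rw [hEt, fromRows_mulVec, Matrix.one_mulVec, Matrix.zero_mulVec]
  have hEsv : ∀ a : Fin k → ℝ, Es *ᵥ a = Sum.elim a 0 := by
    intro a
    rw [hEs, fromRows_mulVec, Matrix.one_mulVec, Matrix.zero_mulVec]
  set K := Matrix.fromRows (Otᵀ * Et) (Osᵀ * (-Es)) with hKdef
  have hKK : Kᵀ * K = (2:ℝ) • 1 := by
    rw [hKdef, transpose_fromRows, fromCols_mul_fromRows]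
    have h1 : (Otᵀ * Et)ᵀ * (Otᵀ * Et) = 1 := by
      calc (Otᵀ * Et)ᵀ * (Otᵀ * Et) = Etᵀ * (Ot * Otᵀ * Et) := by
            simp [Matrix.transpose_mul, Matrix.mul_assoc]
        _ = 1 := by rw [hOt1, Matrix.one_mul, hEtEt]
    have h2 : (Osᵀ * (-Es))ᵀ * (Osᵀ * (-Es)) = 1 := by
      calc (Osᵀ * (-Es))ᵀ * (Osᵀ * (-Es)) = Esᵀ * (Os * Osᵀ * Es) := by
            simp [Matrix.transpose_mul, Matrix.mul_assoc, Matrix.transpose_neg,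
              Matrix.neg_mul, Matrix.mul_neg]
        _ = 1 := by rw [hOs1, Matrix.one_mul, hEsEs]
    rw [h1, h2, two_smul]
  have hYtEt : Matrix.fromCols Z Wt * Et = Z := by
    rw [hEt, fromCols_mul_fromRows]; simp
  have hYsEs : Matrix.fromCols Z Ws * Es = Z := by
    rw [hEs, fromCols_mul_fromRows]; simp
  have hYtK : Yt * (Otᵀ * Et) = Z := by
    calc Yt * (Otᵀ * Et) = Matrix.fromCols Z Wt * ((Ot * Otᵀ) * Et) := by
          rw [hYtfac]; simp only [Matrix.mul_assoc]
      _ = Z := by rw [hOt1, Matrix.one_mul, hYtEt]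
  have hYsK : Ys * (Osᵀ * Es) = Z := by
    calc Ys * (Osᵀ * Es) = Matrix.fromCols Z Ws * ((Os * Osᵀ) * Es) := by
          rw [hYsfac]; simp only [Matrix.mul_assoc]
      _ = Z := by rw [hOs1, Matrix.one_mul, hYsEs]
  have hMK : Matrix.fromCols Yt Ys * K = 0 := by
    rw [hKdef, fromCols_mul_fromRows]
    have : Ys * (Osᵀ * (-Es)) = -Z := by
      rw [Matrix.mul_neg, Matrix.mul_neg, hYsK]
    rw [hYtK, this, add_neg_cancel]
  have hNK : Matrix.fromCols Yt (-Ys) * K = (2:ℝ) • Z := by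
    rw [hKdef, fromCols_mul_fromRows]
    have : (-Ys) * (Osᵀ * (-Es)) = Z := by
      rw [Matrix.mul_neg, Matrix.neg_mul, Matrix.mul_neg, neg_neg, hYsK]
    rw [hYtK, this, two_smul]
  -- kernel = range of K
  have hker : LinearMap.ker (Matrix.fromCols Yt Ys).mulVecLin
      = LinearMap.range K.mulVecLin := by
    apply le_antisymm
    · intro x hx
      have hx0 : Matrix.fromCols Yt Ys *ᵥ x = 0 := hx
      rw [← Sum.elim_comp_inl_inr x, fromCols_mulVec_sumElim] at hx0
      set u := x ∘ Sum.inl with hu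
      set v := x ∘ Sum.inr with hv
      set p := Ot *ᵥ u with hp
      set q := Os *ᵥ v with hq
      have hYtu : Yt *ᵥ u = Z *ᵥ (p ∘ Sum.inl) + Wt *ᵥ (p ∘ Sum.inr) := by
        rw [hYtfac, ← Matrix.mulVec_mulVec, ← hp, ← Sum.elim_comp_inl_inr p,
          fromCols_mulVec_sumElim]
        simp [Sum.elim_comp_inl_inr]
      have hYsv : Ys *ᵥ v = Z *ᵥ (q ∘ Sum.inl) + Ws *ᵥ (q ∘ Sum.inr) := by
        rw [hYsfac, ← Matrix.mulVec_mulVec, ← hq, ← Sum.elim_comp_inl_inr q,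
          fromCols_mulVec_sumElim]
        simp [Sum.elim_comp_inl_inr]
      have h2 : Z *ᵥ (p ∘ Sum.inl + q ∘ Sum.inl) + Wt *ᵥ (p ∘ Sum.inr)
          + Ws *ᵥ (q ∘ Sum.inr) = 0 := by
        rw [Matrix.mulVec_add]
        calc Z *ᵥ (p ∘ Sum.inl) + Z *ᵥ (q ∘ Sum.inl) + Wt *ᵥ (p ∘ Sum.inr)
              + Ws *ᵥ (q ∘ Sum.inr)
            = (Z *ᵥ (p ∘ Sum.inl) + Wt *ᵥ (p ∘ Sum.inr))
              + (Z *ᵥ (q ∘ Sum.inl) + Ws *ᵥ (q ∘ Sum.inr)) := by abel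
          _ = Yt *ᵥ u + Ys *ᵥ v := by rw [← hYtu, ← hYsv]
          _ = 0 := hx0
      obtain ⟨hA, hB, hC⟩ := habc _ _ _ h2
      refine ⟨p ∘ Sum.inl, ?_⟩
      show K *ᵥ (p ∘ Sum.inl) = x
      rw [hKdef, fromRows_mulVec]
      have e1 : (Otᵀ * Et) *ᵥ (p ∘ Sum.inl) = u := by
        rw [← Matrix.mulVec_mulVec, hEtv, ← hB, Sum.elim_comp_inl_inr,
          hp, Matrix.mulVec_mulVec, hOt2, Matrix.one_mulVec]
      have e2 : (Osᵀ * (-Es)) *ᵥ (p ∘ Sum.inl) = v := by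
        have hneg : (-Es) *ᵥ (p ∘ Sum.inl) = q := by
          have : Es *ᵥ (p ∘ Sum.inl) = Sum.elim (p ∘ Sum.inl) 0 := hEsv _
          rw [Matrix.neg_mulVec, this]
          funext j
          cases j with
          | inl j =>
            have h5 := congrFun hA j
            simp only [Pi.add_apply, Pi.zero_apply, Function.comp_apply] at h5
            simp only [Pi.neg_apply, Sum.elim_inl, Function.comp_apply]
            linarith
          | inr j =>
            have h5 : q (Sum.inr j) = 0 := congrFun hC j
            simp only [Pi.neg_apply, Sum.elim_inr, Pi.zero_apply, h5, neg_zero]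
        rw [← Matrix.mulVec_mulVec, hneg, hq, Matrix.mulVec_mulVec, hOs2,
          Matrix.one_mulVec]
      rw [e1, e2, hu, hv, Sum.elim_comp_inl_inr]
    · rintro x ⟨a, rfl⟩
      show Matrix.fromCols Yt Ys *ᵥ (K *ᵥ a) = 0
      rw [Matrix.mulVec_mulVec, hMK, Matrix.zero_mulVec]
  have hkerK : LinearMap.ker K.mulVecLin = ⊥ := by
    rw [LinearMap.ker_eq_bot']
    intro a ha
    have ha0 : K *ᵥ a = 0 := ha
    have : (Kᵀ * K) *ᵥ a = 0 := by
      rw [← Matrix.mulVec_mulVec, ha0, Matrix.mulVec_zero]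
    rw [hKK, Matrix.smul_mulVec, Matrix.one_mulVec] at this
    have h2 : (2:ℝ) ≠ 0 := two_ne_zero
    funext j
    have := congrFun this j
    simp only [Pi.smul_apply, smul_eq_mul, Pi.zero_apply] at this
    have := mul_eq_zero.mp this
    tauto
  constructor
  · rw [hker]
    have hrn := LinearMap.finrank_range_add_finrank_ker K.mulVecLin
    rw [hkerK] at hrn
    simpa using hrn
  · intro V hV hcols
    have hcols' : ∀ j, (fun i => V i j) ∈ LinearMap.range K.mulVecLin := by
      intro j; rw [← hker]; exact hcols j
    have hcol2 : ∀ j, ∃ c, K *ᵥ c = fun i => V i j := by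
      intro j; obtain ⟨c, hc⟩ := hcols' j; exact ⟨c, hc⟩
    choose af haf using hcol2
    have hKA : K * Matrix.of (fun i j => af j i) = V := by
      ext i j
      have := congrFun (haf j) i
      simpa [Matrix.mul_apply, Matrix.mulVec, dotProduct] using this
    set A : Matrix (Fin k) (Fin k) ℝ := Matrix.of (fun i j => af j i) with hAdef
    have hATA : (2:ℝ) • (Aᵀ * A) = 1 := by
      calc (2:ℝ) • (Aᵀ * A) = Aᵀ * (((2:ℝ) • 1) * A) := by
            rw [Matrix.smul_mul, Matrix.one_mul, Matrix.mul_smul]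
        _ = (K * A)ᵀ * (K * A) := by
            rw [← hKK, Matrix.transpose_mul]
            simp only [Matrix.mul_assoc]
        _ = 1 := by rw [hKA, hV]
    have hAAT : A * Aᵀ = (2:ℝ)⁻¹ • 1 := by
      have h1 : ((2:ℝ) • Aᵀ) * A = 1 := by
        rw [Matrix.smul_mul]; exact hATA
      have h2 : A * ((2:ℝ) • Aᵀ) = 1 := mul_eq_one_comm.mp h1
      rw [Matrix.mul_smul] at h2
      calc A * Aᵀ = (2:ℝ)⁻¹ • ((2:ℝ) • (A * Aᵀ)) := by
            rw [smul_smul]; norm_num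
        _ = (2:ℝ)⁻¹ • (1 : Matrix (Fin k) (Fin k) ℝ) := by rw [h2]
    have hVV : V * Vᵀ = K * (A * Aᵀ) * Kᵀ := by
      rw [← hKA, Matrix.transpose_mul]
      simp only [Matrix.mul_assoc]
    rw [hVV]
    have hfinal : Matrix.fromCols Yt (-Ys) * (K * (A * Aᵀ) * Kᵀ)
        * (Matrix.fromCols Yt (-Ys))ᵀ = (2:ℝ) • (Z * Zᵀ) := by
      calc Matrix.fromCols Yt (-Ys) * (K * (A * Aᵀ) * Kᵀ)
            * (Matrix.fromCols Yt (-Ys))ᵀ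
          = (Matrix.fromCols Yt (-Ys) * K) * (A * Aᵀ)
            * (Matrix.fromCols Yt (-Ys) * K)ᵀ := by
            simp only [Matrix.transpose_mul, Matrix.mul_assoc]
        _ = ((2:ℝ) • Z) * ((2:ℝ)⁻¹ • (1 : Matrix (Fin k) (Fin k) ℝ)) * ((2:ℝ) • Z)ᵀ := by
            rw [hNK, hAAT]
        _ = (2:ℝ) • (Z * Zᵀ) := by
            rw [Matrix.transpose_smul]
            simp only [Matrix.smul_mul, Matrix.mul_smul, Matrix.mul_one, smul_smul]
            norm_num
    rw [hfinal, smul_smul]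
    norm_num
end

section
/- Let M be a real symmetric matrix partitioned into an m×m array of blocks M_{ij} (1 ≤ i, j ≤ m), where each diagonal block M_{ii} is square and symmetric. Suppose there are constants α, β ≥ 0 such that the minimum eigenvalue of every diagonal block satisfies λ_min(M_{ii}) ≥ α, and every off-diagonal block satisfies ‖M_{ij}‖_op ≤ β for i ≠ j. Then the minimum eigenvalue of M satisfies λ_min(M) ≥ α − (m−1)β. -/
open Matrix

/-- The operator norm (largest singular value) of a real matrix `B`, i.e.
`‖B‖_op = sup_{‖v‖₂ = 1} ‖B v‖₂`, realized as the operator norm of the associated linear map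
between Euclidean spaces. -/
noncomputable def matrixOpNorm {m n : Type*} [Fintype m] [Fintype n] [DecidableEq n]
    (B : Matrix m n ℝ) : ℝ :=
  ‖LinearMap.toContinuousLinearMap (Matrix.toEuclideanLin B)‖

open scoped Classical in
/-- The minimum eigenvalue of a real symmetric (Hermitian) matrix; junk value `0` otherwise. -/
noncomputable def lambdaMin {ι : Type*} [Fintype ι] [DecidableEq ι] (M : Matrix ι ι ℝ) : ℝ :=
  if h : M.IsHermitian then ⨅ i, h.eigenvalues i else 0


-- helper: dot product of euclidean norms
lemma norm_sq_eq_dot {p : Type*} [Fintype p] (x : p → ℝ) :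
    ‖(WithLp.equiv 2 (p → ℝ)).symm x‖ ^ 2 = x ⬝ᵥ x := by
  rw [EuclideanSpace.norm_eq]
  rw [Real.sq_sqrt (by positivity)]
  simp [dotProduct, sq]

lemma dot_self_eq_inner {p : Type*} [Fintype p] (x y : p → ℝ) :
    (inner ℝ ((WithLp.equiv 2 (p → ℝ)).symm x) ((WithLp.equiv 2 (p → ℝ)).symm y) : ℝ) = x ⬝ᵥ y := by
  simp [PiLp.inner_apply, dotProduct, RCLike.inner_apply, mul_comm]

lemma posSemidef_sub_smul {ι : Type*} [Fintype ι] [DecidableEq ι] {A : Matrix ι ι ℝ}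
    (hA : A.IsHermitian) {c : ℝ} (h : ∀ i, c ≤ hA.eigenvalues i) :
    (A - c • 1).PosSemidef := by
  have key : A - c • (1 : Matrix ι ι ℝ) =
      (hA.eigenvectorUnitary : Matrix ι ι ℝ) * diagonal (fun i => hA.eigenvalues i - c) *
        ((hA.eigenvectorUnitary : Matrix ι ι ℝ))ᴴ := by
    have hUU : (hA.eigenvectorUnitary : Matrix ι ι ℝ) *
        ((hA.eigenvectorUnitary : Matrix ι ι ℝ))ᴴ = 1 :=
      Matrix.mem_unitaryGroup_iff.mp hA.eigenvectorUnitary.2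
    have hdiag : diagonal (fun i => hA.eigenvalues i - c) =
        diagonal (RCLike.ofReal ∘ hA.eigenvalues) - c • (1 : Matrix ι ι ℝ) := by
      rw [smul_one_eq_diagonal, ← diagonal_sub]
      rfl
    rw [hdiag, mul_sub, sub_mul]
    rw [Matrix.mul_smul, Matrix.smul_mul, mul_one, hUU]
    have := hA.spectral_theorem
    rw [Unitary.conjStarAlgAut_apply, Matrix.star_eq_conjTranspose] at this
    rw [← this]
  rw [key]
  exact (posSemidef_diagonal_iff.mpr fun i => sub_nonneg.mpr (h i)).mul_mul_conjTranspose_same _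

lemma quad_of_eig_ge {ι : Type*} [Fintype ι] [DecidableEq ι] {A : Matrix ι ι ℝ}
    (hA : A.IsHermitian) {c : ℝ} (h : ∀ i, c ≤ hA.eigenvalues i) (x : ι → ℝ) :
    c * (x ⬝ᵥ x) ≤ x ⬝ᵥ (A *ᵥ x) := by
  have := (posSemidef_sub_smul hA h).dotProduct_mulVec_nonneg x
  rw [star_trivial, sub_mulVec, smul_mulVec, one_mulVec, dotProduct_sub,
    dotProduct_smul] at this
  rw [smul_eq_mul] at this; linarith [this]

lemma eig_ge_of_quad {ι : Type*} [Fintype ι] [DecidableEq ι] {A : Matrix ι ι ℝ}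
    (hA : A.IsHermitian) {c : ℝ} (h : ∀ x : ι → ℝ, c * (x ⬝ᵥ x) ≤ x ⬝ᵥ (A *ᵥ x)) (i : ι) :
    c ≤ hA.eigenvalues i := by
  set v : ι → ℝ := ⇑(hA.eigenvectorBasis i) with hv
  have hnorm : ‖hA.eigenvectorBasis i‖ = 1 := hA.eigenvectorBasis.orthonormal.1 i
  have hvv : v ⬝ᵥ v = 1 := by
    have h1 : (inner ℝ (hA.eigenvectorBasis i) (hA.eigenvectorBasis i) : ℝ) = 1 := by
      rw [real_inner_self_eq_norm_sq, hnorm]; norm_num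
    rw [← h1]
    simp only [PiLp.inner_apply, dotProduct, RCLike.inner_apply, hv, conj_trivial, mul_comm]
  have h2 := h v
  rw [hA.mulVec_eigenvectorBasis, dotProduct_smul, hvv] at h2
  simpa using h2

lemma le_lambdaMin {ι : Type*} [Fintype ι] [DecidableEq ι] [Nonempty ι] {M : Matrix ι ι ℝ}
    (hM : M.IsHermitian) {c : ℝ}
    (h : ∀ x : ι → ℝ, c * (x ⬝ᵥ x) ≤ x ⬝ᵥ (M *ᵥ x)) : c ≤ lambdaMin M := by
  rw [lambdaMin, dif_pos hM]
  exact le_ciInf (eig_ge_of_quad hM h)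

lemma lambdaMin_le_quad {ι : Type*} [Fintype ι] [DecidableEq ι] {M : Matrix ι ι ℝ}
    (hM : M.IsHermitian) {c : ℝ} (h : c ≤ lambdaMin M) (x : ι → ℝ) :
    c * (x ⬝ᵥ x) ≤ x ⬝ᵥ (M *ᵥ x) := by
  rw [lambdaMin, dif_pos hM] at h
  refine quad_of_eig_ge hM (fun i => ?_) x
  exact h.trans (ciInf_le (Finite.bddBelow_range _) i)

lemma dot_le_opNorm {p q : Type*} [Fintype p] [Fintype q] [DecidableEq q]
    (B : Matrix p q ℝ) (x : p → ℝ) (y : q → ℝ) :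
    x ⬝ᵥ (B *ᵥ y) ≤ matrixOpNorm B *
      (‖(WithLp.equiv 2 (p → ℝ)).symm x‖ * ‖(WithLp.equiv 2 (q → ℝ)).symm y‖) := by
  set L := LinearMap.toContinuousLinearMap (Matrix.toEuclideanLin B)
  set xE := (WithLp.equiv 2 (p → ℝ)).symm x
  set yE := (WithLp.equiv 2 (q → ℝ)).symm y
  have hkey : x ⬝ᵥ (B *ᵥ y) = (inner ℝ xE (L yE) : ℝ) := by
    have : L yE = (WithLp.equiv 2 (p → ℝ)).symm (B *ᵥ y) := by
      simp [L, yE, Matrix.toEuclideanLin_apply]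
    rw [this, dot_self_eq_inner]
  rw [hkey]
  calc (inner ℝ xE (L yE) : ℝ) ≤ ‖xE‖ * ‖L yE‖ := real_inner_le_norm _ _
    _ ≤ ‖xE‖ * (‖L‖ * ‖yE‖) := by
        exact mul_le_mul_of_nonneg_left (L.le_opNorm yE) (norm_nonneg _)
    _ = matrixOpNorm B * (‖xE‖ * ‖yE‖) := by rw [matrixOpNorm]; ring

/-- Let `M` be a real symmetric matrix partitioned into an `m × m` array of
blocks `M_{ij}` with square symmetric diagonal blocks.  If `λ_min(M_{ii}) ≥ α` for every `i` and
`‖M_{ij}‖_op ≤ β` for all `i ≠ j`, with `α, β ≥ 0`, then `λ_min(M) ≥ α − (m − 1) β`. -/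
theorem lambdaMin_block_lower_bound
    (m : ℕ) (hm : 0 < m) (d : Fin m → ℕ) (hd : ∀ i, 0 < d i)
    (M : Matrix ((i : Fin m) × Fin (d i)) ((i : Fin m) × Fin (d i)) ℝ)
    (hM : M.IsHermitian)
    (hdiagSym : ∀ i : Fin m,
      (Matrix.of fun a b : Fin (d i) => M ⟨i, a⟩ ⟨i, b⟩).IsHermitian)
    (α β : ℝ) (hα : 0 ≤ α) (hβ : 0 ≤ β)
    (hdiag : ∀ i : Fin m, α ≤ lambdaMin (Matrix.of fun a b : Fin (d i) => M ⟨i, a⟩ ⟨i, b⟩))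
    (hoff : ∀ i j : Fin m, i ≠ j →
      matrixOpNorm (Matrix.of fun (a : Fin (d i)) (b : Fin (d j)) => M ⟨i, a⟩ ⟨j, b⟩) ≤ β) :
    α - ((m : ℝ) - 1) * β ≤ lambdaMin M := by
  have hne : Nonempty ((i : Fin m) × Fin (d i)) := ⟨⟨⟨0, hm⟩, ⟨0, hd ⟨0, hm⟩⟩⟩⟩
  apply le_lambdaMin hM
  intro x
  set xb : ∀ i : Fin m, Fin (d i) → ℝ := fun i a => x ⟨i, a⟩ with hxb
  set Q : Fin m → Fin m → ℝ := fun i j =>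
    xb i ⬝ᵥ ((Matrix.of fun (a : Fin (d i)) (b : Fin (d j)) => M ⟨i, a⟩ ⟨j, b⟩) *ᵥ xb j) with hQ
  set nn : Fin m → ℝ := fun i => ‖(WithLp.equiv 2 (Fin (d i) → ℝ)).symm (xb i)‖ with hnn
  have hn0 : ∀ i, 0 ≤ nn i := fun i => norm_nonneg _
  have hnsq : ∀ i, nn i ^ 2 = xb i ⬝ᵥ xb i := fun i => norm_sq_eq_dot (xb i)
  set S := ∑ i, nn i with hS
  set T := ∑ i, nn i ^ 2 with hT
  have hT0 : 0 ≤ T := Finset.sum_nonneg fun i _ => sq_nonneg _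
  have hxx : x ⬝ᵥ x = T := by
    rw [hT]
    simp only [hnsq]
    rw [dotProduct, ← Finset.univ_sigma_univ, Finset.sum_sigma]
    rfl
  have hdecomp : x ⬝ᵥ (M *ᵥ x) = ∑ i, ∑ j, Q i j := by
    calc x ⬝ᵥ (M *ᵥ x)
        = ∑ p : (i : Fin m) × Fin (d i), ∑ q : (i : Fin m) × Fin (d i),
            x p * (M p q * x q) := by
          simp [dotProduct, mulVec, Finset.mul_sum]
      _ = ∑ i, ∑ a, ∑ j, ∑ b, x ⟨i, a⟩ * (M ⟨i, a⟩ ⟨j, b⟩ * x ⟨j, b⟩) := by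
          rw [← Finset.univ_sigma_univ, Finset.sum_sigma]
          refine Finset.sum_congr rfl fun i _ => ?_
          refine Finset.sum_congr rfl fun a _ => ?_
          rw [Finset.sum_sigma]
      _ = ∑ i, ∑ j, ∑ a, ∑ b, x ⟨i, a⟩ * (M ⟨i, a⟩ ⟨j, b⟩ * x ⟨j, b⟩) := by
          exact Finset.sum_congr rfl fun i _ => Finset.sum_comm
      _ = ∑ i, ∑ j, Q i j := by
          refine Finset.sum_congr rfl fun i _ => Finset.sum_congr rfl fun j _ => ?_
          simp [hQ, dotProduct, mulVec, Finset.mul_sum, hxb]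
  have hdiagQ : ∀ i, α * nn i ^ 2 ≤ Q i i := by
    intro i
    rw [hnsq]
    exact lambdaMin_le_quad (hdiagSym i) (hdiag i) (xb i)
  have hoffQ : ∀ i j, j ≠ i → -(β * (nn i * nn j)) ≤ Q i j := by
    intro i j hij
    have h1 := dot_le_opNorm (Matrix.of fun (a : Fin (d i)) (b : Fin (d j)) =>
      M ⟨i, a⟩ ⟨j, b⟩) (-(xb i)) (xb j)
    have hneg : (WithLp.equiv 2 (Fin (d i) → ℝ)).symm (-(xb i)) =
        -((WithLp.equiv 2 (Fin (d i) → ℝ)).symm (xb i)) := rfl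
    rw [neg_dotProduct, hneg, norm_neg] at h1
    have h2 : matrixOpNorm (Matrix.of fun (a : Fin (d i)) (b : Fin (d j)) =>
        M ⟨i, a⟩ ⟨j, b⟩) * (nn i * nn j) ≤ β * (nn i * nn j) :=
      mul_le_mul_of_nonneg_right (hoff i j (Ne.symm hij))
        (mul_nonneg (hn0 i) (hn0 j))
    have : -(Q i j) ≤ β * (nn i * nn j) := le_trans h1 h2
    linarith
  have hsum : α * T - β * (S ^ 2 - T) ≤ x ⬝ᵥ (M *ᵥ x) := by
    rw [hdecomp]
    have hrow : ∀ i, α * nn i ^ 2 - β * (nn i * (S - nn i)) ≤ ∑ j, Q i j := by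
      intro i
      rw [← Finset.add_sum_erase _ _ (Finset.mem_univ i)]
      have h1 : ∑ j ∈ Finset.univ.erase i, (-(β * (nn i * nn j))) ≤
          ∑ j ∈ Finset.univ.erase i, Q i j :=
        Finset.sum_le_sum fun j hj => hoffQ i j (Finset.ne_of_mem_erase hj)
      have herase : ∑ j ∈ Finset.univ.erase i, nn j = S - nn i := by
        rw [Finset.sum_erase_eq_sub (Finset.mem_univ i), hS]
      have h2 : ∑ j ∈ Finset.univ.erase i, (-(β * (nn i * nn j))) =
          -(β * (nn i * (S - nn i))) := by
        calc ∑ j ∈ Finset.univ.erase i, (-(β * (nn i * nn j)))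
            = (-(β * nn i)) * ∑ j ∈ Finset.univ.erase i, nn j := by
              rw [Finset.mul_sum]
              exact Finset.sum_congr rfl fun j _ => by ring
          _ = -(β * (nn i * (S - nn i))) := by rw [herase]; ring
      have := add_le_add (hdiagQ i) (h2 ▸ h1)
      linarith
    have hST' : ∑ i, nn i * (S - nn i) = S ^ 2 - T := by
      simp only [mul_sub]
      rw [Finset.sum_sub_distrib, ← Finset.sum_mul, ← hS]
      have h3 : ∑ i, nn i * nn i = T := by
        rw [hT]; exact Finset.sum_congr rfl fun i _ => (pow_two _).symm
      rw [h3, sq]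
    calc α * T - β * (S ^ 2 - T) = ∑ i, (α * nn i ^ 2 - β * (nn i * (S - nn i))) := by
          rw [Finset.sum_sub_distrib, ← Finset.mul_sum, ← hT, ← Finset.mul_sum, hST']
      _ ≤ ∑ i, ∑ j, Q i j := Finset.sum_le_sum fun i _ => hrow i
  have hcauchy : S ^ 2 ≤ (m : ℝ) * T := by
    have := sq_sum_le_card_mul_sum_sq (s := Finset.univ) (f := nn)
    simpa using this
  rw [hxx]
  have hfinal : β * (S ^ 2 - T) ≤ β * (((m : ℝ) - 1) * T) :=
    mul_le_mul_of_nonneg_left (by linarith) hβ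
  nlinarith [hsum, hfinal]
end

section
/- Let Z ∈ ℝ^{n×k} and W_t ∈ ℝ^{n×k_t} for 1 ≤ t ≤ T, and let M₄ > 0 be a constant. Suppose: (a) for every 1 ≤ t ≤ T, σ_min(Zᵀ Z / n) ≥ M₄ and σ_min(W_tᵀ W_t / n) ≥ M₄; (b) for every 1 ≤ t ≤ T, ‖Zᵀ W_t / n‖_op ≤ M₄/4; and (c) there exist 1 ≤ t < s ≤ T such that ‖W_tᵀ W_s / n‖_op ≤ M₄/4. Then for every 1 ≤ t ≤ T, σ_min(𝒢([Z, W_t])) ≥ 3M₄/4, and for the pair (t, s) in (c), σ_min(𝒢([Z, W_t, W_s])) ≥ M₄/2. -/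
open Matrix

/-- The minimum singular value of a real matrix `M`, i.e. the square root of the minimum
eigenvalue of `Mᴴ M = Mᵀ M`. -/
noncomputable def sigmaMin {n m : Type*} [Fintype n] [Fintype m] [DecidableEq m]
    (M : Matrix n m ℝ) : ℝ :=
  Real.sqrt (⨅ i, (Matrix.isHermitian_conjTranspose_mul_self M).eigenvalues i)

/-- The Gram matrix of `X ∈ ℝ^{n×m}` standardized by its number of rows: `𝒢(X) = Xᵀ X / n`. -/
noncomputable def gramStd {n : ℕ} {m : Type*} [Fintype m] (X : Matrix (Fin n) m ℝ) :
    Matrix m m ℝ :=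
  (n : ℝ)⁻¹ • (Xᵀ * X)

section Helpers

variable {p m q : Type*} [Fintype p] [Fintype m] [Fintype q] [DecidableEq m]

omit [DecidableEq m] in
lemma dot_self_nonneg' (v : m → ℝ) : 0 ≤ v ⬝ᵥ v :=
  Finset.sum_nonneg fun _ _ => mul_self_nonneg _

omit [DecidableEq m] in
lemma dot_XtY (X : Matrix p m ℝ) (Y : Matrix p q ℝ) (v : m → ℝ) (w : q → ℝ) :
    v ⬝ᵥ ((Xᵀ * Y) *ᵥ w) = (X *ᵥ v) ⬝ᵥ (Y *ᵥ w) := by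
  rw [← mulVec_mulVec, dotProduct_mulVec, vecMul_transpose]

lemma rayleigh_ge {A : Matrix m m ℝ} (hA : A.IsHermitian) {c : ℝ}
    (h : ∀ i, c ≤ hA.eigenvalues i) (x : m → ℝ) :
    c * (x ⬝ᵥ x) ≤ x ⬝ᵥ (A *ᵥ x) := by
  set U : Matrix m m ℝ := (hA.eigenvectorUnitary : Matrix m m ℝ) with hU
  have h1 : U * star U = 1 := mem_unitaryGroup_iff.mp hA.eigenvectorUnitary.2
  have h2 : star U * U = 1 := mem_unitaryGroup_iff'.mp hA.eigenvectorUnitary.2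
  have hsU : star U = Uᵀ := by
    rw [star_eq_conjTranspose, conjTranspose_eq_transpose_of_trivial]
  set y : m → ℝ := star U *ᵥ x with hy
  have hx : U *ᵥ y = x := by rw [hy, mulVec_mulVec, h1, one_mulVec]
  have hdx : x ⬝ᵥ x = y ⬝ᵥ y := by
    conv_lhs => rw [← hx]
    rw [dotProduct_mulVec, ← mulVec_transpose, ← hsU, mulVec_mulVec, h2, one_mulVec]
  have hdA : x ⬝ᵥ (A *ᵥ x) = ∑ i, hA.eigenvalues i * (y i)^2 := by
    conv_lhs => rw [hA.spectral_theorem, Unitary.conjStarAlgAut_apply]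
    rw [← mulVec_mulVec, ← mulVec_mulVec, dotProduct_mulVec, ← mulVec_transpose, ← hsU, ← hy]
    have hdiag : diagonal (RCLike.ofReal ∘ hA.eigenvalues) = diagonal hA.eigenvalues := by
      congr 1
    rw [hdiag]
    simp only [dotProduct, mulVec_diagonal]
    exact Finset.sum_congr rfl fun i _ => by ring
  rw [hdx, hdA, dotProduct, Finset.mul_sum]
  apply Finset.sum_le_sum
  intro i _
  have := h i
  nlinarith [sq_nonneg (y i)]

end Helpers

section Helpers2
set_option linter.unusedSectionVars false
variable {p m q : Type*} [Fintype p] [Fintype m] [Fintype q] [DecidableEq m]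

lemma euclid_dot_self (v : EuclideanSpace ℝ m) : (⇑v : m → ℝ) ⬝ᵥ ⇑v = ‖v‖ ^ 2 := by
  rw [← real_inner_self_eq_norm_sq]
  simp only [dotProduct, PiLp.inner_apply, RCLike.inner_apply, conj_trivial]

lemma eig_ge_of_norm (M : Matrix p m ℝ) {c : ℝ}
    (h : ∀ x : m → ℝ, c ^ 2 * (x ⬝ᵥ x) ≤ (M *ᵥ x) ⬝ᵥ (M *ᵥ x)) (i : m) :
    c ^ 2 ≤ (isHermitian_conjTranspose_mul_self M).eigenvalues i := by
  set hH := isHermitian_conjTranspose_mul_self M with hhH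
  set v : m → ℝ := ⇑(hH.eigenvectorBasis i) with hv
  have hv1 : v ⬝ᵥ v = 1 := by
    rw [hv, euclid_dot_self, hH.eigenvectorBasis.orthonormal.1 i]; norm_num
  have hmv : (Mᵀ * M) *ᵥ v = hH.eigenvalues i • v := hH.mulVec_eigenvectorBasis i
  have := h v
  rw [← dot_XtY M M v v, hmv, dotProduct_smul, smul_eq_mul, hv1, mul_one, mul_one] at this
  exact this

lemma sigma_to_normsq (M : Matrix p m ℝ) {c : ℝ} (hc : 0 ≤ c) (h : c ≤ sigmaMin M)
    (x : m → ℝ) : c ^ 2 * (x ⬝ᵥ x) ≤ (M *ᵥ x) ⬝ᵥ (M *ᵥ x) := by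
  rcases isEmpty_or_nonempty m with hm | hm
  · have hx : x ⬝ᵥ x = 0 := by simp [dotProduct]
    have hMx : M *ᵥ x = 0 := by ext i; simp [mulVec, dotProduct]
    simp [hx, hMx]
  · have h0 : (0:ℝ) ≤ ⨅ i, (isHermitian_conjTranspose_mul_self M).eigenvalues i :=
      le_ciInf fun i => eigenvalues_conjTranspose_mul_self_nonneg M i
    have h2 : c ^ 2 ≤ ⨅ i, (isHermitian_conjTranspose_mul_self M).eigenvalues i :=
      (Real.le_sqrt hc h0).mp h
    have h3 : ∀ i, c ^ 2 ≤ (isHermitian_conjTranspose_mul_self M).eigenvalues i := fun i =>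
      h2.trans (ciInf_le (Finite.bddBelow_range _) i)
    have := rayleigh_ge (isHermitian_conjTranspose_mul_self M) h3 x
    rw [conjTranspose_eq_transpose_of_trivial] at this
    rwa [dot_XtY M M x x] at this

lemma normsq_to_sigma (M : Matrix p m ℝ) [Nonempty m] {c : ℝ} (hc : 0 ≤ c)
    (h : ∀ x : m → ℝ, c ^ 2 * (x ⬝ᵥ x) ≤ (M *ᵥ x) ⬝ᵥ (M *ᵥ x)) : c ≤ sigmaMin M := by
  rw [sigmaMin, show c = Real.sqrt (c ^ 2) from (Real.sqrt_sq hc).symm]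
  exact Real.sqrt_le_sqrt (le_ciInf fun i => eig_ge_of_norm M h i)

lemma nonempty_of_sigmaMin (M : Matrix p m ℝ) {c : ℝ} (hc : 0 < c)
    (h : c ≤ sigmaMin M) : Nonempty m := by
  by_contra hne
  have : IsEmpty m := not_nonempty_iff.mp hne
  rw [sigmaMin, iInf_of_isEmpty, Real.sInf_empty, Real.sqrt_zero] at h
  exact absurd h (not_le.mpr hc)

lemma hyp_quad (X : Matrix p m ℝ) {c r : ℝ} (hc : 0 ≤ c) (hr : 0 ≤ r)
    (h : c ≤ sigmaMin (r • (Xᵀ * X))) (v : m → ℝ) :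
    c * (v ⬝ᵥ v) ≤ r * ((X *ᵥ v) ⬝ᵥ (X *ᵥ v)) := by
  set A : Matrix m m ℝ := r • (Xᵀ * X) with hA
  have hXt : Xᴴ = Xᵀ := conjTranspose_eq_transpose_of_trivial X
  have hHe : (Xᵀ * X).IsHermitian := by
    have := isHermitian_conjTranspose_mul_self X
    rwa [hXt] at this
  have hPSD : A.PosSemidef := by
    refine PosSemidef.of_dotProduct_mulVec_nonneg ?_ ?_
    · show Aᴴ = A
      rw [hA, conjTranspose_smul, hHe.eq, star_trivial]
    · intro x
      rw [hA, smul_mulVec, dotProduct_smul, star_trivial, smul_eq_mul, dot_XtY]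
      exact mul_nonneg hr (dot_self_nonneg' _)
  have hnorm := sigma_to_normsq A hc h
  have heig : ∀ i, c ≤ hPSD.1.eigenvalues i := by
    intro i
    set v : m → ℝ := ⇑(hPSD.1.eigenvectorBasis i) with hv
    have hv1 : v ⬝ᵥ v = 1 := by
      rw [hv, euclid_dot_self, hPSD.1.eigenvectorBasis.orthonormal.1 i]; norm_num
    have hmv : A *ᵥ v = hPSD.1.eigenvalues i • v := hPSD.1.mulVec_eigenvectorBasis i
    have := hnorm v
    rw [hmv, smul_dotProduct, dotProduct_smul, smul_eq_mul, smul_eq_mul, hv1] at this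
    have hnn := hPSD.eigenvalues_nonneg i
    nlinarith
  have := rayleigh_ge hPSD.1 heig v
  rwa [hA, smul_mulVec, dotProduct_smul, smul_eq_mul, dot_XtY] at this

lemma quad_to_normsq (G : Matrix m m ℝ) {c : ℝ} (hc : 0 ≤ c)
    (h : ∀ x : m → ℝ, c * (x ⬝ᵥ x) ≤ x ⬝ᵥ (G *ᵥ x)) (x : m → ℝ) :
    c ^ 2 * (x ⬝ᵥ x) ≤ (G *ᵥ x) ⬝ᵥ (G *ᵥ x) := by
  have hCS : (x ⬝ᵥ (G *ᵥ x)) ^ 2 ≤ (x ⬝ᵥ x) * ((G *ᵥ x) ⬝ᵥ (G *ᵥ x)) := by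
    have := Finset.sum_mul_sq_le_sq_mul_sq Finset.univ x (G *ᵥ x)
    simpa [dotProduct, sq] using this
  have ha : 0 ≤ x ⬝ᵥ x := dot_self_nonneg' x
  have hb : 0 ≤ (G *ᵥ x) ⬝ᵥ (G *ᵥ x) := dot_self_nonneg' _
  have hd := h x
  rcases eq_or_lt_of_le ha with h0 | h0
  · rw [← h0]; simpa using hb
  · have hd0 : 0 ≤ x ⬝ᵥ (G *ᵥ x) := le_trans (mul_nonneg hc ha) hd
    have h1 : (c * (x ⬝ᵥ x)) ^ 2 ≤ (x ⬝ᵥ (G *ᵥ x)) ^ 2 :=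
      pow_le_pow_left₀ (mul_nonneg hc ha) hd 2
    apply le_of_mul_le_mul_left _ h0
    nlinarith [h1, hCS]

lemma opnorm_dot [DecidableEq p] (B : Matrix p m ℝ) (u : p → ℝ) (v : m → ℝ) :
    u ⬝ᵥ (B *ᵥ v) ≤ matrixOpNorm B * (Real.sqrt (u ⬝ᵥ u) * Real.sqrt (v ⬝ᵥ v)) := by
  set f := LinearMap.toContinuousLinearMap (Matrix.toEuclideanLin B) with hf
  set u' : EuclideanSpace ℝ p := (WithLp.equiv 2 (p → ℝ)).symm u with hu'
  set v' : EuclideanSpace ℝ m := (WithLp.equiv 2 (m → ℝ)).symm v with hv'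
  have hnu : ‖u'‖ = Real.sqrt (u ⬝ᵥ u) := by
    rw [EuclideanSpace.norm_eq]
    congr 1
    simp [dotProduct, Real.norm_eq_abs, sq_abs, sq, hu', WithLp.equiv_symm_apply]
  have hnv : ‖v'‖ = Real.sqrt (v ⬝ᵥ v) := by
    rw [EuclideanSpace.norm_eq]
    congr 1
    simp [dotProduct, Real.norm_eq_abs, sq_abs, sq, hv', WithLp.equiv_symm_apply]
  have key : u ⬝ᵥ (B *ᵥ v) = inner ℝ u' (f v') := by
    rw [hf]
    simp only [LinearMap.coe_toContinuousLinearMap', hv',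
      Matrix.toEuclideanLin_apply_piLp_toLp]
    simp [PiLp.inner_apply, RCLike.inner_apply, starRingEnd_apply, dotProduct,
      hu', WithLp.equiv_symm_apply, mul_comm]
  rw [key]
  calc inner ℝ u' (f v') ≤ ‖u'‖ * ‖f v'‖ := real_inner_le_norm u' (f v')
    _ ≤ ‖u'‖ * (‖f‖ * ‖v'‖) := by
        have := f.le_opNorm v'
        exact mul_le_mul_of_nonneg_left this (norm_nonneg _)
    _ = matrixOpNorm B * (Real.sqrt (u ⬝ᵥ u) * Real.sqrt (v ⬝ᵥ v)) := by
        rw [hnu, hnv, matrixOpNorm]; ring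

lemma dot_sum_split (x y : (m ⊕ q) → ℝ) :
    x ⬝ᵥ y = (x ∘ Sum.inl) ⬝ᵥ (y ∘ Sum.inl) + (x ∘ Sum.inr) ⬝ᵥ (y ∘ Sum.inr) := by
  simp [dotProduct, Fintype.sum_sum_type]

end Helpers2

section Main

lemma gram_quad {n : ℕ} {m : Type*} [Fintype m] (X : Matrix (Fin n) m ℝ) (x : m → ℝ) :
    x ⬝ᵥ (gramStd X *ᵥ x) = (n : ℝ)⁻¹ * ((X *ᵥ x) ⬝ᵥ (X *ᵥ x)) := by
  rw [gramStd, smul_mulVec, dotProduct_smul, smul_eq_mul, dot_XtY]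

lemma cross_bound {m₁ m₂ : Type*} [Fintype m₁] [Fintype m₂] [DecidableEq m₁] [DecidableEq m₂]
    (B : Matrix m₁ m₂ ℝ) {c : ℝ} (hB : matrixOpNorm B ≤ c) (u : m₁ → ℝ) (v : m₂ → ℝ) :
    -(c * (Real.sqrt (u ⬝ᵥ u) * Real.sqrt (v ⬝ᵥ v))) ≤ u ⬝ᵥ (B *ᵥ v) := by
  have h := opnorm_dot B (-u) v
  rw [neg_dotProduct, neg_dotProduct, dotProduct_neg, neg_neg] at h
  have hs : 0 ≤ Real.sqrt (u ⬝ᵥ u) * Real.sqrt (v ⬝ᵥ v) :=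
    mul_nonneg (Real.sqrt_nonneg _) (Real.sqrt_nonneg _)
  have h2 := h.trans (mul_le_mul_of_nonneg_right hB hs)
  linarith

lemma two_block_quad {n : ℕ} {m₁ m₂ : Type*} [Fintype m₁] [Fintype m₂]
    [DecidableEq m₁] [DecidableEq m₂] {M₄ : ℝ} (hM₄ : 0 < M₄)
    (Z : Matrix (Fin n) m₁ ℝ) (W : Matrix (Fin n) m₂ ℝ)
    (hZ : M₄ ≤ sigmaMin ((n : ℝ)⁻¹ • (Zᵀ * Z)))
    (hW : M₄ ≤ sigmaMin ((n : ℝ)⁻¹ • (Wᵀ * W)))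
    (hB : matrixOpNorm ((n : ℝ)⁻¹ • (Zᵀ * W)) ≤ M₄ / 4)
    (x : m₁ ⊕ m₂ → ℝ) :
    (3 * M₄ / 4) * (x ⬝ᵥ x) ≤ x ⬝ᵥ (gramStd (fromCols Z W) *ᵥ x) := by
  have hr : (0:ℝ) ≤ (n : ℝ)⁻¹ := by positivity
  set x₁ := x ∘ Sum.inl with hx₁
  set x₂ := x ∘ Sum.inr with hx₂
  have hmul : fromCols Z W *ᵥ x = Z *ᵥ x₁ + W *ᵥ x₂ := by
    conv_lhs => rw [← Sum.elim_comp_inl_inr x]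
    rw [fromCols_mulVec_sumElim]
  rw [gram_quad, hmul]
  set y := Z *ᵥ x₁ with hy
  set w := W *ᵥ x₂ with hw
  have hexp : (y + w) ⬝ᵥ (y + w) = y ⬝ᵥ y + 2 * (y ⬝ᵥ w) + w ⬝ᵥ w := by
    rw [add_dotProduct, dotProduct_add, dotProduct_add, dotProduct_comm w y]; ring
  rw [hexp]
  have h1 : M₄ * (x₁ ⬝ᵥ x₁) ≤ (n : ℝ)⁻¹ * (y ⬝ᵥ y) := hyp_quad Z hM₄.le hr hZ x₁
  have h2 : M₄ * (x₂ ⬝ᵥ x₂) ≤ (n : ℝ)⁻¹ * (w ⬝ᵥ w) := hyp_quad W hM₄.le hr hW x₂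
  set a := Real.sqrt (x₁ ⬝ᵥ x₁) with hsa
  set b := Real.sqrt (x₂ ⬝ᵥ x₂) with hsb
  have hcross : -(M₄ / 4 * (a * b)) ≤ (n : ℝ)⁻¹ * (y ⬝ᵥ w) := by
    have heq : (n : ℝ)⁻¹ * (y ⬝ᵥ w) = x₁ ⬝ᵥ (((n : ℝ)⁻¹ • (Zᵀ * W)) *ᵥ x₂) := by
      rw [smul_mulVec, dotProduct_smul, smul_eq_mul, dot_XtY]
    rw [heq]
    exact cross_bound _ hB x₁ x₂
  have ha2 : a ^ 2 = x₁ ⬝ᵥ x₁ := Real.sq_sqrt (dot_self_nonneg' _)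
  have hb2 : b ^ 2 = x₂ ⬝ᵥ x₂ := Real.sq_sqrt (dot_self_nonneg' _)
  have hxx : x ⬝ᵥ x = x₁ ⬝ᵥ x₁ + x₂ ⬝ᵥ x₂ := dot_sum_split x x
  rw [hxx]
  nlinarith [mul_nonneg hM₄.le (sq_nonneg (a - b)), h1, h2, hcross, ha2, hb2]

lemma three_block_quad {n : ℕ} {m₁ m₂ m₃ : Type*} [Fintype m₁] [Fintype m₂] [Fintype m₃]
    [DecidableEq m₁] [DecidableEq m₂] [DecidableEq m₃] {M₄ : ℝ} (hM₄ : 0 < M₄)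
    (Z : Matrix (Fin n) m₁ ℝ) (W : Matrix (Fin n) m₂ ℝ) (V : Matrix (Fin n) m₃ ℝ)
    (hZ : M₄ ≤ sigmaMin ((n : ℝ)⁻¹ • (Zᵀ * Z)))
    (hW : M₄ ≤ sigmaMin ((n : ℝ)⁻¹ • (Wᵀ * W)))
    (hV : M₄ ≤ sigmaMin ((n : ℝ)⁻¹ • (Vᵀ * V)))
    (hZW : matrixOpNorm ((n : ℝ)⁻¹ • (Zᵀ * W)) ≤ M₄ / 4)
    (hZV : matrixOpNorm ((n : ℝ)⁻¹ • (Zᵀ * V)) ≤ M₄ / 4)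
    (hWV : matrixOpNorm ((n : ℝ)⁻¹ • (Wᵀ * V)) ≤ M₄ / 4)
    (x : (m₁ ⊕ m₂) ⊕ m₃ → ℝ) :
    (M₄ / 2) * (x ⬝ᵥ x) ≤ x ⬝ᵥ (gramStd (fromCols (fromCols Z W) V) *ᵥ x) := by
  have hr : (0:ℝ) ≤ (n : ℝ)⁻¹ := by positivity
  set xl := x ∘ Sum.inl with hxl
  set x₁ := xl ∘ Sum.inl with hx₁
  set x₂ := xl ∘ Sum.inr with hx₂
  set x₃ := x ∘ Sum.inr with hx₃
  have hmul : fromCols (fromCols Z W) V *ᵥ x = Z *ᵥ x₁ + W *ᵥ x₂ + V *ᵥ x₃ := by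
    conv_lhs => rw [← Sum.elim_comp_inl_inr x]
    rw [fromCols_mulVec_sumElim]
    congr 1
    conv_lhs => rw [← Sum.elim_comp_inl_inr (x ∘ Sum.inl)]
    rw [fromCols_mulVec_sumElim]
  rw [gram_quad, hmul]
  set y := Z *ᵥ x₁ with hy
  set w := W *ᵥ x₂ with hw
  set v := V *ᵥ x₃ with hv
  have hexp : (y + w + v) ⬝ᵥ (y + w + v) =
      y ⬝ᵥ y + w ⬝ᵥ w + v ⬝ᵥ v + 2 * (y ⬝ᵥ w) + 2 * (y ⬝ᵥ v) + 2 * (w ⬝ᵥ v) := by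
    simp only [add_dotProduct, dotProduct_add]
    rw [dotProduct_comm w y, dotProduct_comm v y, dotProduct_comm v w]; ring
  rw [hexp]
  have h1 : M₄ * (x₁ ⬝ᵥ x₁) ≤ (n : ℝ)⁻¹ * (y ⬝ᵥ y) := hyp_quad Z hM₄.le hr hZ x₁
  have h2 : M₄ * (x₂ ⬝ᵥ x₂) ≤ (n : ℝ)⁻¹ * (w ⬝ᵥ w) := hyp_quad W hM₄.le hr hW x₂
  have h3 : M₄ * (x₃ ⬝ᵥ x₃) ≤ (n : ℝ)⁻¹ * (v ⬝ᵥ v) := hyp_quad V hM₄.le hr hV x₃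
  set a := Real.sqrt (x₁ ⬝ᵥ x₁) with hsa
  set b := Real.sqrt (x₂ ⬝ᵥ x₂) with hsb
  set c := Real.sqrt (x₃ ⬝ᵥ x₃) with hsc
  have hc12 : -(M₄ / 4 * (a * b)) ≤ (n : ℝ)⁻¹ * (y ⬝ᵥ w) := by
    have heq : (n : ℝ)⁻¹ * (y ⬝ᵥ w) = x₁ ⬝ᵥ (((n : ℝ)⁻¹ • (Zᵀ * W)) *ᵥ x₂) := by
      rw [smul_mulVec, dotProduct_smul, smul_eq_mul, dot_XtY]
    rw [heq]; exact cross_bound _ hZW x₁ x₂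
  have hc13 : -(M₄ / 4 * (a * c)) ≤ (n : ℝ)⁻¹ * (y ⬝ᵥ v) := by
    have heq : (n : ℝ)⁻¹ * (y ⬝ᵥ v) = x₁ ⬝ᵥ (((n : ℝ)⁻¹ • (Zᵀ * V)) *ᵥ x₃) := by
      rw [smul_mulVec, dotProduct_smul, smul_eq_mul, dot_XtY]
    rw [heq]; exact cross_bound _ hZV x₁ x₃
  have hc23 : -(M₄ / 4 * (b * c)) ≤ (n : ℝ)⁻¹ * (w ⬝ᵥ v) := by
    have heq : (n : ℝ)⁻¹ * (w ⬝ᵥ v) = x₂ ⬝ᵥ (((n : ℝ)⁻¹ • (Wᵀ * V)) *ᵥ x₃) := by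
      rw [smul_mulVec, dotProduct_smul, smul_eq_mul, dot_XtY]
    rw [heq]; exact cross_bound _ hWV x₂ x₃
  have ha2 : a ^ 2 = x₁ ⬝ᵥ x₁ := Real.sq_sqrt (dot_self_nonneg' _)
  have hb2 : b ^ 2 = x₂ ⬝ᵥ x₂ := Real.sq_sqrt (dot_self_nonneg' _)
  have hc2 : c ^ 2 = x₃ ⬝ᵥ x₃ := Real.sq_sqrt (dot_self_nonneg' _)
  have hxx : x ⬝ᵥ x = x₁ ⬝ᵥ x₁ + x₂ ⬝ᵥ x₂ + x₃ ⬝ᵥ x₃ := by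
    rw [dot_sum_split x x, dot_sum_split (x ∘ Sum.inl) (x ∘ Sum.inl)]
  rw [hxx]
  nlinarith [mul_nonneg hM₄.le (sq_nonneg (a - b)), mul_nonneg hM₄.le (sq_nonneg (a - c)),
    mul_nonneg hM₄.le (sq_nonneg (b - c)), h1, h2, h3, hc12, hc13, hc23, ha2, hb2, hc2]

end Main

/-- **Proposition 3.** If (a) `σ_min(Zᵀ Z / n) ≥ M₄` and
`σ_min(W_tᵀ W_t / n) ≥ M₄` for all `t`, (b) `‖Zᵀ W_t / n‖_op ≤ M₄/4` for all `t`, and (c) there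
exist `t < s` with `‖W_tᵀ W_s / n‖_op ≤ M₄/4`, then `σ_min(𝒢([Z, W_t])) ≥ 3M₄/4` for every `t`,
and `σ_min(𝒢([Z, W_t, W_s])) ≥ M₄/2` for the pair `(t, s)` in (c). -/
theorem sigmaMin_gram_lower_bounds
    (n k T : ℕ) (kt : Fin T → ℕ) (M₄ : ℝ) (hM₄ : 0 < M₄)
    (Z : Matrix (Fin n) (Fin k) ℝ)
    (W : (t : Fin T) → Matrix (Fin n) (Fin (kt t)) ℝ)
    (haZ : ∀ t : Fin T, M₄ ≤ sigmaMin ((n : ℝ)⁻¹ • (Zᵀ * Z)))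
    (haW : ∀ t : Fin T, M₄ ≤ sigmaMin ((n : ℝ)⁻¹ • ((W t)ᵀ * W t)))
    (hb : ∀ t : Fin T, matrixOpNorm ((n : ℝ)⁻¹ • (Zᵀ * W t)) ≤ M₄ / 4)
    (hc : ∃ t s : Fin T, t < s ∧ matrixOpNorm ((n : ℝ)⁻¹ • ((W t)ᵀ * W s)) ≤ M₄ / 4) :
    (∀ t : Fin T, 3 * M₄ / 4 ≤ sigmaMin (gramStd (Matrix.fromCols Z (W t)))) ∧
      (∀ t s : Fin T, t < s → matrixOpNorm ((n : ℝ)⁻¹ • ((W t)ᵀ * W s)) ≤ M₄ / 4 →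
        M₄ / 2 ≤ sigmaMin (gramStd (Matrix.fromCols (Matrix.fromCols Z (W t)) (W s)))) := by
  constructor
  · intro t
    haveI hne1 : Nonempty (Fin k) := nonempty_of_sigmaMin _ hM₄ (haZ t)
    haveI hne2 : Nonempty (Fin (kt t)) := nonempty_of_sigmaMin _ hM₄ (haW t)
    have hc34 : (0:ℝ) ≤ 3 * M₄ / 4 := by linarith
    refine normsq_to_sigma _ hc34 fun x => quad_to_normsq _ hc34 (fun z => ?_) x
    exact two_block_quad hM₄ Z (W t) (haZ t) (haW t) (hb t) z
  · intro t s hts hWts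
    haveI hne1 : Nonempty (Fin k) := nonempty_of_sigmaMin _ hM₄ (haZ t)
    haveI hne2 : Nonempty (Fin (kt t)) := nonempty_of_sigmaMin _ hM₄ (haW t)
    haveI hne3 : Nonempty (Fin (kt s)) := nonempty_of_sigmaMin _ hM₄ (haW s)
    have hc12 : (0:ℝ) ≤ M₄ / 2 := by linarith
    refine normsq_to_sigma _ hc12 fun x => quad_to_normsq _ hc12 (fun z => ?_) x
    exact three_block_quad hM₄ Z (W t) (W s) (haZ t) (haW t) (haW s) (hb t) (hb s) hWts z
end
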